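/- arXiv:1910.04182 — 2 statements merged into one kernel-verified Lean document; each statement's English description precedes it below -/
import Mathlib

section
/- For every i = 1,…,n−1, the operators T_i on ℚFl(V) satisfy the braid relation T_i T_{i+1} T_i = T_{i+1} T_i T_{i+1}. -/
/-!
The `(W, X)` entry of `T a ∘ T b ∘ T a` counts galleries `W —a— V —b— U —a— X` of flags. For
`{a, b} = {i, i + 1}` such a gallery is determined by `V_a`, which is forced to be
`W_{i+1} ⊓ X_{i+1}` for the type `(i, i + 1, i)` and `W_i ⊔ X_i` for the type `(i + 1, i, i + 1)`.
A gallery of either type exists exactly when `W` and `X` agree outside `{i, i + 1}`,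
`W_i ⊄ X_{i+1}` and `X_i ⊄ W_{i+1}`. So both entries are `0` or `1`, and they agree.
-/

structure CompleteFlag (F : Type) [Field F] (n : ℕ) where
  toFun : Fin (n + 2) → Submodule F (Fin (n + 1) → F)
  mono : Monotone toFun
  rank : ∀ i : Fin (n + 2), Module.finrank F (toFun i) = (i : ℕ)

instance (F : Type) [Field F] [Fintype F] (n : ℕ) : Finite (CompleteFlag F n) := by
  have : Finite (Submodule F (Fin (n + 1) → F)) :=
    Finite.of_injective (fun s => (s : Set (Fin (n + 1) → F))) SetLike.coe_injective
  exact Finite.of_injective (fun W => W.toFun)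
    (fun W W' h => by cases W; cases W'; simpa using h)

noncomputable instance (F : Type) [Field F] [Fintype F] (n : ℕ) :
    Fintype (CompleteFlag F n) := Fintype.ofFinite _

open Classical in
/-- The operator `Tᵢ` on `ℚ Fl(V)`: it sends a flag `(V_j)_j` to the sum of all flags
`(V_j')_j` with `V_j' = V_j` for `j ≠ i` and `V_i' ≠ V_i`. -/
noncomputable def T (F : Type) [Field F] [Fintype F] (n : ℕ) (i : Fin (n + 2)) :
    (CompleteFlag F n → ℚ) →ₗ[ℚ] (CompleteFlag F n → ℚ) where
  toFun f := fun W => ∑ V : CompleteFlag F n,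
    if (∀ j, j ≠ i → V.toFun j = W.toFun j) ∧ V.toFun i ≠ W.toFun i then f V else 0
  map_add' f g := by
    funext W
    simp only [Pi.add_apply]
    rw [← Finset.sum_add_distrib]
    refine Finset.sum_congr rfl fun V _ => ?_
    split <;> simp
  map_smul' c f := by
    funext W
    simp only [Pi.smul_apply, RingHom.id_apply, smul_eq_mul, Finset.mul_sum]
    refine Finset.sum_congr rfl fun V _ => ?_
    split <;> simp

section FiniteDimensional

open Module

variable {K V : Type*} [DivisionRing K] [AddCommGroup V] [Module K V] [FiniteDimensional K V]

theorem Submodule.eq_of_le_inf_of_le_inf {p p' q q' : Submodule K V} {d : ℕ}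
    (hp : p ≤ q ⊓ q') (hp' : p' ≤ q ⊓ q') (hne : p ≠ p')
    (rp : finrank K p = d) (rp' : finrank K p' = d)
    (rq : finrank K q = d + 1) (rq' : finrank K q' = d + 1) : q = q' := by
  have hlt : p < p ⊔ p' :=
    lt_of_le_of_ne le_sup_left fun h =>
      hne (Submodule.eq_of_le_of_finrank_le (h ▸ le_sup_right) (by omega)).symm
  have sup_eq : ∀ r : Submodule K V, p ⊔ p' ≤ r → finrank K r = d + 1 → p ⊔ p' = r :=
    fun r hr rr => Submodule.eq_of_le_of_finrank_le hr
      (by have := Submodule.finrank_lt_finrank_of_lt hlt; omega)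
  exact (sup_eq q (sup_le (hp.trans inf_le_left) (hp'.trans inf_le_left)) rq).symm.trans
    (sup_eq q' (sup_le (hp.trans inf_le_right) (hp'.trans inf_le_right)) rq')

theorem Submodule.finrank_inf_of_ne {p q D : Submodule K V} {d : ℕ} (hp : p ≤ D) (hq : q ≤ D)
    (hne : p ≠ q) (rp : finrank K p = d + 1) (rq : finrank K q = d + 1)
    (rD : finrank K D = d + 2) : finrank K ↥(p ⊓ q) = d := by
  have hlt : p < p ⊔ q :=
    lt_of_le_of_ne le_sup_left fun h =>
      hne (Submodule.eq_of_le_of_finrank_le (h ▸ le_sup_right) (by omega)).symm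
  have := Submodule.finrank_lt_finrank_of_lt hlt
  have := Submodule.finrank_mono (sup_le hp hq)
  have := Submodule.finrank_sup_add_finrank_inf_eq p q
  omega

theorem Submodule.finrank_sup_of_ne {c p q : Submodule K V} {d : ℕ} (hp : c ≤ p) (hq : c ≤ q)
    (hne : p ≠ q) (rc : finrank K c = d) (rp : finrank K p = d + 1)
    (rq : finrank K q = d + 1) : finrank K ↥(p ⊔ q) = d + 2 := by
  have hlt : p ⊓ q < p :=
    lt_of_le_of_ne inf_le_left fun h =>
      hne (Submodule.eq_of_le_of_finrank_le (h ▸ inf_le_right) (by omega))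
  have := Submodule.finrank_lt_finrank_of_lt hlt
  have := Submodule.finrank_mono (le_inf hp hq)
  have := Submodule.finrank_sup_add_finrank_inf_eq p q
  omega

end FiniteDimensional

theorem Matrix.boole_mul_boole_mul_boole_apply {ι R : Type*} [Fintype ι] [Semiring R]
    (A B C : ι → ι → Prop) [DecidableRel A] [DecidableRel B] [DecidableRel C] (x y : ι) :
    (Matrix.of (fun u v => if A u v then (1 : R) else 0) *
        Matrix.of (fun u v => if B u v then (1 : R) else 0) *
        Matrix.of (fun u v => if C u v then (1 : R) else 0)) x y =
      Nat.card {p : ι × ι // A x p.1 ∧ B p.1 p.2 ∧ C p.2 y} := by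
  classical
  simp only [Nat.card_eq_fintype_card, Fintype.card_subtype, Finset.card_filter,
    Fintype.sum_prod_type, Matrix.mul_apply, Matrix.of_apply, Finset.sum_mul, boole_mul]
  rw [Finset.sum_comm]
  push_cast
  refine Finset.sum_congr rfl fun u _ => Finset.sum_congr rfl fun v _ => ?_
  by_cases hA : A x u <;> by_cases hB : B u v <;> by_cases hC : C v y <;> simp [hA, hB, hC]

namespace CompleteFlag

open Module

variable {F : Type} [Field F] {n : ℕ}

theorem toFun_injective : Function.Injective (toFun : CompleteFlag F n → _) := by
  rintro ⟨W, _, _⟩ ⟨W', _, _⟩ rfl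
  rfl

def Adj (k : Fin (n + 2)) (W V : CompleteFlag F n) : Prop :=
  (∀ j, j ≠ k → V.toFun j = W.toFun j) ∧ V.toFun k ≠ W.toFun k

theorem Adj.symm {k : Fin (n + 2)} {W V : CompleteFlag F n} (h : Adj k W V) : Adj k V W :=
  ⟨fun j hj => (h.1 j hj).symm, h.2.symm⟩

def update (W : CompleteFlag F n) (k : Fin (n + 2)) (S : Submodule F (Fin (n + 1) → F))
    (hlo : ∀ j < k, W.toFun j ≤ S) (hhi : ∀ j, k < j → S ≤ W.toFun j)
    (hS : finrank F S = k) : CompleteFlag F n where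
  toFun := Function.update W.toFun k S
  mono a b hab := by
    simp only [Function.update_apply]
    split_ifs with ha hb hb
    · exact le_rfl
    · exact hhi b (lt_of_le_of_ne (ha ▸ hab) (Ne.symm hb))
    · exact hlo a (lt_of_le_of_ne (hb ▸ hab) ha)
    · exact W.mono hab
  rank j := by
    show finrank F ↥(Function.update W.toFun k S j) = j
    by_cases hj : j = k
    · rw [hj, Function.update_self, hS]
    · rw [Function.update_of_ne hj, W.rank j]

@[simp]
theorem update_toFun (W : CompleteFlag F n) (k : Fin (n + 2))
    (S : Submodule F (Fin (n + 1) → F)) (hlo hhi hS) :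
    (W.update k S hlo hhi hS).toFun = Function.update W.toFun k S :=
  rfl

theorem adj_update {W : CompleteFlag F n} {k : Fin (n + 2)} {S : Submodule F (Fin (n + 1) → F)}
    (hlo : ∀ j < k, W.toFun j ≤ S) (hhi : ∀ j, k < j → S ≤ W.toFun j)
    (hS : finrank F S = k) (hSW : S ≠ W.toFun k) : Adj k W (W.update k S hlo hhi hS) :=
  ⟨fun _ hj => by simp [hj], by simpa using hSW⟩

def IsGallery (a b : Fin (n + 2)) (W X : CompleteFlag F n)
    (p : CompleteFlag F n × CompleteFlag F n) : Prop :=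
  Adj a W p.1 ∧ Adj b p.1 p.2 ∧ Adj a p.2 X

/-- For `b = a + 1` this says that `W` and `X` are in the relative position of the longest element
of the subgroup generated by `sₐ, s_b`: in the plane `W_{a+2} / W_{a-1}` the point `W_a` is off the
line `X_b`, and `X_a` is off `W_b`. -/
def IsOpposite (a b : Fin (n + 2)) (W X : CompleteFlag F n) : Prop :=
  (∀ j, j ≠ a → j ≠ b → X.toFun j = W.toFun j) ∧
    ¬ W.toFun a ≤ X.toFun b ∧ ¬ X.toFun a ≤ W.toFun b

namespace IsGallery

variable {a b : Fin (n + 2)} {W X : CompleteFlag F n} {p : CompleteFlag F n × CompleteFlag F n}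

theorem symm (h : IsGallery a b W X p) : IsGallery a b X W p.swap :=
  ⟨h.2.2.symm, h.2.1.symm, h.1.symm⟩

theorem toFun_eq (h : IsGallery a b W X p) {j : Fin (n + 2)} (ha : j ≠ a) (hb : j ≠ b) :
    X.toFun j = W.toFun j :=
  (h.2.2.1 j ha).trans ((h.2.1.1 j hb).trans (h.1.1 j ha))

theorem toFun_ne (hab : a ≠ b) (h : IsGallery a b W X p) : X.toFun b ≠ W.toFun b := by
  rw [h.2.2.1 b hab.symm, ← h.1.1 b hab.symm]
  exact h.2.1.2

theorem le_inf (hab : a < b) (h : IsGallery a b W X p) :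
    p.1.toFun a ≤ W.toFun b ⊓ X.toFun b := by
  refine _root_.le_inf ((p.1.mono hab.le).trans_eq (h.1.1 b hab.ne')) ?_
  rw [h.2.2.1 b hab.ne', ← h.2.1.1 a hab.ne]
  exact p.2.mono hab.le

theorem sup_le (hab : b < a) (h : IsGallery a b W X p) :
    W.toFun b ⊔ X.toFun b ≤ p.1.toFun a := by
  refine _root_.sup_le ((h.1.1 b hab.ne).symm.trans_le (p.1.mono hab.le)) ?_
  rw [h.2.2.1 b hab.ne, ← h.2.1.1 a hab.ne']
  exact p.2.mono hab.le

theorem eq_of_toFun_eq (hab : a ≠ b) {p' : CompleteFlag F n × CompleteFlag F n}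
    (h : IsGallery a b W X p) (h' : IsGallery a b W X p')
    (hVa : p.1.toFun a = p'.1.toFun a) : p = p' := by
  have hV : p.1 = p'.1 := toFun_injective <| funext fun j => by
    rcases eq_or_ne j a with rfl | hj
    · exact hVa
    · rw [h.1.1 j hj, h'.1.1 j hj]
  refine Prod.ext hV (toFun_injective <| funext fun j => ?_)
  rcases eq_or_ne j a with rfl | hj
  · rw [h.2.1.1 j hab, h'.2.1.1 j hab, hV]
  · rw [← h.2.2.1 j hj, ← h'.2.2.1 j hj]

end IsGallery

theorem isGallery_update {a b : Fin (n + 2)} {W X : CompleteFlag F n}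
    {S : Submodule F (Fin (n + 1) → F)} (hab : a ≠ b)
    (hWX : ∀ j, j ≠ a → j ≠ b → X.toFun j = W.toFun j) (hb : X.toFun b ≠ W.toFun b)
    (hWlo : ∀ j < a, W.toFun j ≤ S) (hWhi : ∀ j, a < j → S ≤ W.toFun j)
    (hXlo : ∀ j < a, X.toFun j ≤ S) (hXhi : ∀ j, a < j → S ≤ X.toFun j)
    (hS : finrank F S = a) (hSW : S ≠ W.toFun a) (hSX : S ≠ X.toFun a) :
    IsGallery a b W X (W.update a S hWlo hWhi hS, X.update a S hXlo hXhi hS) := by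
  refine ⟨adj_update hWlo hWhi hS hSW, ⟨fun j hj => ?_, ?_⟩,
    (adj_update hXlo hXhi hS hSX).symm⟩
  · rcases eq_or_ne j a with rfl | hja
    · simp
    · simp [hja, hWX j hja hj]
  · simpa [hab.symm] using hb

section Braid

variable {i i' : Fin (n + 2)} {W X : CompleteFlag F n} {p : CompleteFlag F n × CompleteFlag F n}

theorem subsingleton_isGallery_inf (hii' : (i' : ℕ) = i + 1) :
    Subsingleton {p // IsGallery i i' W X p} := by
  have hlt : i < i' := by omega
  refine ⟨fun ⟨p, h⟩ ⟨p', h'⟩ => Subtype.ext (h.eq_of_toFun_eq hlt.ne h' ?_)⟩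
  by_contra hne
  exact h.toFun_ne hlt.ne (Submodule.eq_of_le_inf_of_le_inf (h.le_inf hlt) (h'.le_inf hlt) hne
    (p.1.rank i) (p'.1.rank i) ((W.rank i').trans hii') ((X.rank i').trans hii')).symm

theorem subsingleton_isGallery_sup (hii' : (i' : ℕ) = i + 1) :
    Subsingleton {p // IsGallery i' i W X p} := by
  have hlt : i < i' := by omega
  refine ⟨fun ⟨p, h⟩ ⟨p', h'⟩ => Subtype.ext (h.eq_of_toFun_eq hlt.ne' h' ?_)⟩
  exact Submodule.eq_of_le_inf_of_le_inf
    (_root_.le_inf (le_sup_left.trans (h.sup_le hlt)) (le_sup_left.trans (h'.sup_le hlt)))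
    (_root_.le_inf (le_sup_right.trans (h.sup_le hlt)) (le_sup_right.trans (h'.sup_le hlt)))
    (h.toFun_ne hlt.ne').symm (W.rank i) (X.rank i)
    ((p.1.rank i').trans hii') ((p'.1.rank i').trans hii')

theorem IsGallery.not_le_of_inf (hii' : (i' : ℕ) = i + 1) (h : IsGallery i i' W X p) :
    ¬ W.toFun i ≤ X.toFun i' := by
  have hlt : i < i' := by omega
  intro hle
  exact h.toFun_ne hlt.ne (Submodule.eq_of_le_inf_of_le_inf
    (_root_.le_inf (W.mono hlt.le) hle) (h.le_inf hlt) (Ne.symm h.1.2) (W.rank i)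
    (p.1.rank i) ((W.rank i').trans hii') ((X.rank i').trans hii')).symm

theorem IsGallery.not_le_of_sup (hii' : (i' : ℕ) = i + 1) (h : IsGallery i' i W X p) :
    ¬ W.toFun i ≤ X.toFun i' := by
  have hlt : i < i' := by omega
  intro hle
  refine h.2.2.2 ((Submodule.eq_of_le_inf_of_le_inf
    (_root_.le_inf (le_sup_left.trans (h.sup_le hlt)) hle)
    (_root_.le_inf (le_sup_right.trans (h.sup_le hlt)) (X.mono hlt.le))
    (h.toFun_ne hlt.ne').symm (W.rank i) (X.rank i)
    ((p.1.rank i').trans hii') ((X.rank i').trans hii')).symm.trans ?_)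
  exact (h.2.1.1 i' hlt.ne').symm

theorem IsGallery.isOpposite_of_inf (hii' : (i' : ℕ) = i + 1) (h : IsGallery i i' W X p) :
    IsOpposite i i' W X :=
  ⟨fun _ => h.toFun_eq, h.not_le_of_inf hii', h.symm.not_le_of_inf hii'⟩

theorem IsGallery.isOpposite_of_sup (hii' : (i' : ℕ) = i + 1) (h : IsGallery i' i W X p) :
    IsOpposite i i' W X :=
  ⟨fun _ hi hi' => h.toFun_eq hi' hi, h.not_le_of_sup hii', h.symm.not_le_of_sup hii'⟩

theorem IsOpposite.exists_isGallery_inf (hii' : (i' : ℕ) = i + 1) (hi : (i : ℕ) + 2 < n + 2)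
    (h : IsOpposite i i' W X) : ∃ p, IsGallery i i' W X p := by
  obtain ⟨hWX, hW, hX⟩ := h
  have hlt : i < i' := by omega
  obtain ⟨ip2, hip2⟩ : ∃ k : Fin (n + 2), (k : ℕ) = i + 2 := ⟨⟨_, hi⟩, rfl⟩
  have hne : X.toFun i' ≠ W.toFun i' := fun he => hW (he ▸ W.mono hlt.le)
  have hrank : finrank F ↥(W.toFun i' ⊓ X.toFun i') = i := by
    refine Submodule.finrank_inf_of_ne (W.mono (show i' ≤ ip2 by omega)) ?_ hne.symm
      ((W.rank i').trans hii') ((X.rank i').trans hii') ((W.rank ip2).trans hip2)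
    rw [← hWX ip2 (by omega) (by omega)]
    exact X.mono (show i' ≤ ip2 by omega)
  have fits : ∀ {Y Z : CompleteFlag F n}, (∀ j, j ≠ i → j ≠ i' → Z.toFun j = Y.toFun j) →
      (∀ j < i, Y.toFun j ≤ Y.toFun i' ⊓ Z.toFun i') ∧
        ∀ j, i < j → Y.toFun i' ⊓ Z.toFun i' ≤ Y.toFun j := by
    refine fun {Y Z} hYZ => ⟨fun j hj => _root_.le_inf (Y.mono (by omega)) ?_,
      fun j hj => inf_le_left.trans (Y.mono (by omega))⟩
    rw [← hYZ j (by omega) (by omega)]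
    exact Z.mono (by omega)
  have hWfit := fits hWX
  have hXfit := fits fun j hi hi' => (hWX j hi hi').symm
  rw [inf_comm] at hXfit
  exact ⟨_, isGallery_update hlt.ne hWX hne hWfit.1 hWfit.2 hXfit.1 hXfit.2 hrank
    (fun he => hW (he ▸ inf_le_right)) (fun he => hX (he ▸ inf_le_left))⟩

theorem IsOpposite.exists_isGallery_sup (hii' : (i' : ℕ) = i + 1) (hi : 1 ≤ (i : ℕ))
    (h : IsOpposite i i' W X) : ∃ p, IsGallery i' i W X p := by
  obtain ⟨hWX, hW, hX⟩ := h
  have hlt : i < i' := by omega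
  obtain ⟨im1, him1⟩ : ∃ k : Fin (n + 2), (k : ℕ) = i - 1 := ⟨⟨i - 1, by omega⟩, rfl⟩
  have hne : X.toFun i ≠ W.toFun i := fun he => hX (he ▸ W.mono hlt.le)
  have hrank : finrank F ↥(W.toFun i ⊔ X.toFun i) = i' := by
    have hc : W.toFun im1 ≤ X.toFun i := by
      rw [← hWX im1 (by omega) (by omega)]
      exact X.mono (show im1 ≤ i by omega)
    have := Submodule.finrank_sup_of_ne (W.mono (show im1 ≤ i by omega)) hc hne.symm
      ((W.rank im1).trans him1) ((W.rank i).trans (by omega)) ((X.rank i).trans (by omega))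
    omega
  have fits : ∀ {Y Z : CompleteFlag F n}, (∀ j, j ≠ i → j ≠ i' → Z.toFun j = Y.toFun j) →
      (∀ j < i', Y.toFun j ≤ Y.toFun i ⊔ Z.toFun i) ∧
        ∀ j, i' < j → Y.toFun i ⊔ Z.toFun i ≤ Y.toFun j := by
    refine fun {Y Z} hYZ => ⟨fun j hj => (Y.mono (by omega)).trans le_sup_left,
      fun j hj => _root_.sup_le (Y.mono (by omega)) ?_⟩
    rw [← hYZ j (by omega) (by omega)]
    exact Z.mono (by omega)
  have hWfit := fits hWX
  have hXfit := fits fun j hi hi' => (hWX j hi hi').symm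
  rw [sup_comm] at hXfit
  exact ⟨_, isGallery_update hlt.ne' (fun j hi' hi => hWX j hi hi') hne hWfit.1 hWfit.2
    hXfit.1 hXfit.2 hrank (fun he => hX (he ▸ le_sup_right)) (fun he => hW (he ▸ le_sup_left))⟩

theorem card_isGallery_inf_eq_card_isGallery_sup (hii' : (i' : ℕ) = i + 1) (hi1 : 1 ≤ (i : ℕ))
    (hi2 : (i : ℕ) + 2 < n + 2) :
    Nat.card {p // IsGallery i i' W X p} = Nat.card {p // IsGallery i' i W X p} :=
  have := subsingleton_isGallery_inf (W := W) (X := X) hii'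
  have := subsingleton_isGallery_sup (W := W) (X := X) hii'
  Nat.card_congr <| equivOfSubsingletonOfSubsingleton
    (fun p => Classical.indefiniteDescription _
      ((p.2.isOpposite_of_inf hii').exists_isGallery_sup hii' hi1))
    (fun p => Classical.indefiniteDescription _
      ((p.2.isOpposite_of_sup hii').exists_isGallery_inf hii' hi2))

end Braid

open Classical in
noncomputable def adjMatrix (k : Fin (n + 2)) : Matrix (CompleteFlag F n) (CompleteFlag F n) ℚ :=
  Matrix.of fun W V => if Adj k W V then 1 else 0

end CompleteFlag

theorem T_eq_toLin' (F : Type) [Field F] [Fintype F] (n : ℕ) (k : Fin (n + 2))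
    [DecidableEq (CompleteFlag F n)] : T F n k = Matrix.toLin' (CompleteFlag.adjMatrix k) := by
  classical
  refine LinearMap.ext fun f => funext fun W => ?_
  simp only [T, CompleteFlag.adjMatrix, Matrix.toLin'_apply, Matrix.mulVec, dotProduct,
    Matrix.of_apply, boole_mul, LinearMap.coe_mk, AddHom.coe_mk]
  exact Finset.sum_congr rfl fun V _ => if_congr Iff.rfl rfl rfl

theorem hecke_braid_relation_general (F : Type) [Field F] [Fintype F] (n : ℕ)
    (i i' : Fin (n + 2)) (hii' : (i' : ℕ) = (i : ℕ) + 1)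
    (hi1 : 1 ≤ (i : ℕ)) (hi2 : (i : ℕ) ≤ n - 1) :
    (T F n i) ∘ₗ (T F n i') ∘ₗ (T F n i)
      = (T F n i') ∘ₗ (T F n i) ∘ₗ (T F n i') := by
  classical
  simp only [T_eq_toLin', ← Matrix.toLin'_mul, ← Matrix.mul_assoc]
  congr 1
  ext W X
  simp only [CompleteFlag.adjMatrix, Matrix.boole_mul_boole_mul_boole_apply]
  exact congrArg Nat.cast
    (CompleteFlag.card_isGallery_inf_eq_card_isGallery_sup hii' hi1 (by omega))

/-- For `i = 1, …, n−1` the braid relation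
`Tᵢ T_{i+1} Tᵢ = T_{i+1} Tᵢ T_{i+1}` holds. -/
theorem hecke_braid_relation (F : Type) [Field F] [Fintype F] (n : ℕ) (hn : 1 ≤ n)
    (i i' : Fin (n + 2)) (hii' : (i' : ℕ) = (i : ℕ) + 1)
    (hi1 : 1 ≤ (i : ℕ)) (hi2 : (i : ℕ) ≤ n - 1) :
    (T F n i) ∘ₗ (T F n i') ∘ₗ (T F n i)
      = (T F n i') ∘ₗ (T F n i) ∘ₗ (T F n i') :=
  hecke_braid_relation_general F n i i' hii' hi1 hi2
end

section
/- Let Y = {1,…,n} be a finite totally ordered ℤ-graded set with grading deg, and let Z = {1,…,2n} be graded by deg_Z(i) = deg(i)+1 for 1 ≤ i ≤ n and deg_Z(i) = deg(i−n) for n < i ≤ 2n. For a partial ruling (D,δ) of Y define D̄ = D ∪ (D+n) ∪ ((Y∖(D∪δ(D)))+n) and δ̄(i) = δ(i) for i ∈ D, δ̄(i) = δ(i−n)+n for i ∈ D+n, and δ̄(i) = i−n for i ∈ (Y∖(D∪δ(D)))+n. Then (D̄,δ̄) is a ruling of Z, and the map (D,δ) ↦ (D̄,δ̄) from partial rulings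 of Y to rulings of Z is injective. -/
/-!
STATEMENT 10.  Let `Y = {1,…,n}` be graded by `deg` and `Z = {1,…,2n}` graded by
`degZ i = deg i + 1` for `1 ≤ i ≤ n` and `degZ i = deg (i − n)` for `n < i ≤ 2n`
(this is the grading of `Y[−1] ⊗ Y`).  For a partial ruling `(D, δ)` of `Y` define
`D̄ = D ∪ (D+n) ∪ ((Y∖(D∪δ(D)))+n)` and `δ̄` by `δ̄ i = δ i` on `D`,
`δ̄ i = δ(i−n)+n` on `D+n`, and `δ̄ i = i−n` on `(Y∖(D∪δ(D)))+n`.  Then `(D̄, δ̄)` is a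
ruling of `Z`, and the map `(D,δ) ↦ (D̄,δ̄)` is injective on partial rulings.
-/

/-- `(D, δ)` is a partial ruling of the graded ordered set `(S, deg)` (`δ` is a total
function, constrained only on `D`). -/
def IsPartialRulingPair (S : Finset ℕ) (deg : ℕ → ℤ) (D : Finset ℕ) (δ : ℕ → ℕ) : Prop :=
  D ⊆ S ∧ (∀ x ∈ D, δ x ∈ S ∧ δ x ∉ D) ∧
    (∀ x ∈ D, ∀ x' ∈ D, δ x = δ x' → x = x') ∧
    (∀ x ∈ D, δ x < x ∧ deg (δ x) = deg x + 1)

/-- A partial ruling is a ruling when `X = D ∪ δ(D)`. -/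
def IsRulingPair (S : Finset ℕ) (deg : ℕ → ℤ) (D : Finset ℕ) (δ : ℕ → ℕ) : Prop :=
  IsPartialRulingPair S deg D δ ∧ ∀ z ∈ S, z ∉ D → ∃ x ∈ D, δ x = z

/-- The grading on `Z = {1,…,2n}` induced by a grading `deg` on `Y = {1,…,n}`:
`Y[−1] ⊗ Y`. -/
def degZ (n : ℕ) (deg : ℕ → ℤ) : ℕ → ℤ :=
  fun i => if i ≤ n then deg i + 1 else deg (i - n)

/-- `D̄ = D ∪ (D+n) ∪ ((Y∖(D∪δ(D)))+n)`. -/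
def barD (n : ℕ) (D : Finset ℕ) (δ : ℕ → ℕ) : Finset ℕ :=
  D ∪ D.image (· + n) ∪ ((Finset.Icc 1 n \ (D ∪ D.image δ)).image (· + n))

/-- `δ̄`, equal to `δ` on `D`, to `δ(·−n)+n` on `D+n`, to `·−n` on
`(Y∖(D∪δ(D)))+n`, and (irrelevantly) to the identity elsewhere. -/
def barδ (n : ℕ) (D : Finset ℕ) (δ : ℕ → ℕ) : ℕ → ℕ :=
  fun i =>
    if i ∈ D then δ i
    else if n < i ∧ i - n ∈ D then δ (i - n) + n
    else if n < i ∧ i - n ∈ Finset.Icc 1 n \ (D ∪ D.image δ) then i - n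
    else i

/-- `(D̄, δ̄)` is a ruling of `Z = {1,…,2n}` with the grading `degZ`,
and the map `(D, δ) ↦ (D̄, δ̄)` from partial rulings of `Y` to rulings of `Z` is
injective. -/
theorem bar_partial_ruling_is_ruling_and_injective (n : ℕ) (deg : ℕ → ℤ) :
    (∀ D δ, IsPartialRulingPair (Finset.Icc 1 n) deg D δ →
        IsRulingPair (Finset.Icc 1 (2 * n)) (degZ n deg) (barD n D δ) (barδ n D δ)) ∧
    (∀ D δ D' δ',
        IsPartialRulingPair (Finset.Icc 1 n) deg D δ →
        IsPartialRulingPair (Finset.Icc 1 n) deg D' δ' →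
        barD n D δ = barD n D' δ' →
        (∀ i, barδ n D δ i = barδ n D' δ' i) →
        D = D' ∧ ∀ x ∈ D, δ x = δ' x) := by
  have hmem : ∀ (D : Finset ℕ) (δ : ℕ → ℕ) (x : ℕ), x ∈ barD n D δ ↔
      (x ∈ D ∨ ∃ a ∈ D, a + n = x) ∨
        ∃ a, ((1 ≤ a ∧ a ≤ n) ∧ ¬(a ∈ D ∨ ∃ b ∈ D, δ b = a)) ∧ a + n = x := by
    intro D δ x
    simp only [barD, Finset.mem_union, Finset.mem_image, Finset.mem_sdiff, Finset.mem_Icc]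
  have memD_bound : ∀ (D : Finset ℕ), D ⊆ Finset.Icc 1 n → ∀ x ∈ D, 1 ≤ x ∧ x ≤ n := by
    intro D hDS x hx
    simpa [Finset.mem_Icc] using hDS hx
  -- branch lemmas for barδ
  have hb1 : ∀ (D : Finset ℕ) (δ : ℕ → ℕ) (x : ℕ), x ∈ D → barδ n D δ x = δ x := by
    intro D δ x hx; simp [barδ, hx]
  have hb2 : ∀ (D : Finset ℕ) (δ : ℕ → ℕ), D ⊆ Finset.Icc 1 n →
      ∀ d ∈ D, barδ n D δ (d + n) = δ d + n := by
    intro D δ hDS d hd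
    have hDb := memD_bound D hDS
    have h1 : d + n ∉ D := fun hmem => by
      have h2 := (hDb _ hmem).2; have h3 := (hDb d hd).1; omega
    have h2 : n < d + n := by have := (hDb d hd).1; omega
    simp [barδ, h1, h2, hd]
  have hb3 : ∀ (D : Finset ℕ) (δ : ℕ → ℕ), D ⊆ Finset.Icc 1 n →
      ∀ s, 1 ≤ s → s ≤ n → s ∉ D → (∀ d ∈ D, δ d ≠ s) → barδ n D δ (s + n) = s := by
    intro D δ hDS s hs1 hs2 hsD hsI
    have hDb := memD_bound D hDS
    have h1 : s + n ∉ D := fun hmem => by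
      have h2 := (hDb _ hmem).2; omega
    have h2 : n < s + n := by omega
    have hmemsd : s + n - n ∈ Finset.Icc 1 n \ (D ∪ D.image δ) := by
      simp only [Nat.add_sub_cancel, Finset.mem_sdiff, Finset.mem_Icc, Finset.mem_union,
        Finset.mem_image]
      refine ⟨⟨hs1, hs2⟩, ?_⟩
      push_neg
      exact ⟨hsD, fun d hd => hsI d hd⟩
    have heval : barδ n D δ (s + n) = s + n - n := by
      simp only [barδ]
      rw [if_neg h1, if_neg (by simp [Nat.add_sub_cancel, hsD]), if_pos ⟨h2, hmemsd⟩]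
    rw [heval]
    omega
  constructor
  · rintro D δ ⟨hDS, hrange, hinj, hlt⟩
    have hDb := memD_bound D hDS
    have hδb : ∀ x ∈ D, 1 ≤ δ x ∧ δ x ≤ n := fun x hx => by
      simpa [Finset.mem_Icc] using (hrange x hx).1
    -- helper: evaluate barδ on the three pieces, with membership & not-membership facts
    refine ⟨⟨?_, ?_, ?_, ?_⟩, ?_⟩
    · -- barD ⊆ Icc 1 (2n)
      intro x hx
      rw [hmem] at hx
      simp only [Finset.mem_Icc]
      rcases hx with (hx | ⟨d, hd, rfl⟩) | ⟨s, ⟨⟨hs1, hs2⟩, _⟩, rfl⟩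
      · have := hDb x hx; omega
      · have := hDb d hd; omega
      · omega
    · -- range condition
      intro x hx
      rw [hmem] at hx
      rcases hx with (hx | ⟨d, hd, rfl⟩) | ⟨s, ⟨⟨hs1, hs2⟩, hsnot⟩, rfl⟩
      · rw [hb1 D δ x hx]
        constructor
        · have := hδb x hx; simp only [Finset.mem_Icc]; omega
        · rw [hmem]
          push_neg
          have hδn := (hrange x hx).2
          have hδ2 := hδb x hx
          refine ⟨⟨hδn, fun d hd => ?_⟩, fun s hs => ?_⟩
          · have := hDb d hd; omega
          · intro heq; exfalso; omega
      · rw [hb2 D δ hDS d hd]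
        have hδ2 := hδb d hd
        constructor
        · simp only [Finset.mem_Icc]; omega
        · rw [hmem]
          push_neg
          have hδn := (hrange d hd).2
          refine ⟨⟨fun hmem' => ?_, fun d' hd' heq => ?_⟩, fun s hs heq => ?_⟩
          · have := hDb _ hmem'; omega
          · have : δ d ∈ D := by
              have : d' = δ d := by omega
              rwa [this] at hd'
            exact hδn this
          · exfalso
            have : s = δ d := by omega
            exact hs.2.2 d hd this.symm
      · push_neg at hsnot
        rw [hb3 D δ hDS s hs1 hs2 hsnot.1 hsnot.2]
        constructor
        · simp only [Finset.mem_Icc]; omega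
        · rw [hmem]
          push_neg
          refine ⟨⟨hsnot.1, fun d hd heq => ?_⟩, fun t ht heq => ?_⟩
          · have := hDb d hd; omega
          · rcases ht with ⟨⟨ht1, _⟩, _⟩; omega
    · -- injectivity of barδ on barD
      intro x hx x' hx' heq
      rw [hmem] at hx hx'
      rcases hx with (hx | ⟨d, hd, rfl⟩) | ⟨s, ⟨⟨hs1, hs2⟩, hsnot⟩, rfl⟩ <;>
        rcases hx' with (hx' | ⟨d', hd', rfl⟩) | ⟨s', ⟨⟨hs1', hs2'⟩, hsnot'⟩, rfl⟩
      · rw [hb1 D δ x hx, hb1 D δ x' hx'] at heq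
        exact hinj x hx x' hx' heq
      · rw [hb1 D δ x hx, hb2 D δ hDS d' hd'] at heq
        have h1 := hδb x hx; have h2 := hδb d' hd'; omega
      · push_neg at hsnot'
        rw [hb1 D δ x hx, hb3 D δ hDS s' hs1' hs2' hsnot'.1 hsnot'.2] at heq
        exact absurd heq (hsnot'.2 x hx)
      · rw [hb2 D δ hDS d hd, hb1 D δ x' hx'] at heq
        have h1 := hδb x' hx'; have h2 := hδb d hd; omega
      · rw [hb2 D δ hDS d hd, hb2 D δ hDS d' hd'] at heq
        have : δ d = δ d' := by omega
        rw [hinj d hd d' hd' this]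
      · push_neg at hsnot'
        rw [hb2 D δ hDS d hd, hb3 D δ hDS s' hs1' hs2' hsnot'.1 hsnot'.2] at heq
        have := hδb d hd; omega
      · push_neg at hsnot
        rw [hb3 D δ hDS s hs1 hs2 hsnot.1 hsnot.2, hb1 D δ x' hx'] at heq
        exact absurd heq.symm (hsnot.2 x' hx')
      · push_neg at hsnot
        rw [hb3 D δ hDS s hs1 hs2 hsnot.1 hsnot.2, hb2 D δ hDS d' hd'] at heq
        have := hδb d' hd'; omega
      · push_neg at hsnot; push_neg at hsnot'
        rw [hb3 D δ hDS s hs1 hs2 hsnot.1 hsnot.2,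
          hb3 D δ hDS s' hs1' hs2' hsnot'.1 hsnot'.2] at heq
        omega
    · -- δ̄ x < x and degree condition
      intro x hx
      rw [hmem] at hx
      rcases hx with (hx | ⟨d, hd, rfl⟩) | ⟨s, ⟨⟨hs1, hs2⟩, hsnot⟩, rfl⟩
      · rw [hb1 D δ x hx]
        have h1 := (hlt x hx).1
        have h2 := (hlt x hx).2
        have h3 := hδb x hx
        have h4 := hDb x hx
        refine ⟨h1, ?_⟩
        simp only [degZ, if_pos h3.2, if_pos h4.2]
        linarith
      · rw [hb2 D δ hDS d hd]
        have h1 := (hlt d hd).1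
        have h2 := (hlt d hd).2
        have h3 := hδb d hd
        have h4 := hDb d hd
        refine ⟨by omega, ?_⟩
        simp only [degZ, if_neg (by omega : ¬ δ d + n ≤ n), if_neg (by omega : ¬ d + n ≤ n),
          Nat.add_sub_cancel]
        linarith
      · push_neg at hsnot
        rw [hb3 D δ hDS s hs1 hs2 hsnot.1 hsnot.2]
        refine ⟨by omega, ?_⟩
        simp only [degZ, if_pos hs2, if_neg (by omega : ¬ s + n ≤ n), Nat.add_sub_cancel]
    · -- surjectivity
      intro z hz hznot
      simp only [Finset.mem_Icc] at hz
      rw [hmem] at hznot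
      push_neg at hznot
      obtain ⟨⟨hz1, hz2⟩, hz3⟩ := hznot
      by_cases hle : z ≤ n
      · by_cases hexδ : ∃ d ∈ D, δ d = z
        · obtain ⟨d, hd, hdz⟩ := hexδ
          exact ⟨d, (hmem D δ d).2 (Or.inl (Or.inl hd)), by rw [hb1 D δ d hd, hdz]⟩
        · push_neg at hexδ
          refine ⟨z + n, (hmem D δ (z + n)).2 (Or.inr ⟨z, ⟨⟨hz.1, hle⟩, ?_⟩, rfl⟩), ?_⟩
          · push_neg; exact ⟨hz1, hexδ⟩
          · exact hb3 D δ hDS z hz.1 hle hz1 hexδ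
      · -- z > n
        have hm1 : 1 ≤ z - n := by omega
        have hm2 : z - n ≤ n := by omega
        have hmD : z - n ∉ D := fun hmem' => hz2 (z - n) hmem' (by omega)
        have hmδ : ∃ d ∈ D, δ d = z - n := by
          by_contra hcon
          push_neg at hcon
          exact absurd (by omega) (hz3 (z - n) ⟨⟨hm1, hm2⟩, ⟨hmD, hcon⟩⟩)
        obtain ⟨d, hd, hdm⟩ := hmδ
        refine ⟨d + n, (hmem D δ (d + n)).2 (Or.inl (Or.inr ⟨d, hd, rfl⟩)), ?_⟩
        rw [hb2 D δ hDS d hd, hdm]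
        omega
  · -- injectivity of the map
    rintro D δ D' δ' ⟨hDS, _, _, _⟩ ⟨hDS', _, _, _⟩ hbD hbδ
    have hDb := memD_bound D hDS
    have hDb' := memD_bound D' hDS'
    have hDeq : D = D' := by
      ext x
      constructor
      · intro hx
        have hx2 : x ∈ barD n D' δ' := hbD ▸ (hmem D δ x).2 (Or.inl (Or.inl hx))
        rw [hmem] at hx2
        have hxn := hDb x hx
        rcases hx2 with (hx2 | ⟨d, hd, rfl⟩) | ⟨s, ⟨⟨hs1, _⟩, _⟩, rfl⟩
        · exact hx2
        · have := hDb' d hd; omega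
        · omega
      · intro hx
        have hx2 : x ∈ barD n D δ := hbD ▸ (hmem D' δ' x).2 (Or.inl (Or.inl hx))
        rw [hmem] at hx2
        have hxn := hDb' x hx
        rcases hx2 with (hx2 | ⟨d, hd, rfl⟩) | ⟨s, ⟨⟨hs1, _⟩, _⟩, rfl⟩
        · exact hx2
        · have := hDb d hd; omega
        · omega
    refine ⟨hDeq, fun x hx => ?_⟩
    have h1 := hbδ x
    rw [hb1 D δ x hx, hb1 D' δ' x (hDeq ▸ hx)] at h1
    exact h1
end
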